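/- arXiv:1905.09927 — 4 statements merged into one kernel-verified Lean document; each statement's English description precedes it below -/
import Mathlib

section
/- For a nonzero Gaussian integer γ, the cardinality of the set γQ ∩ ℤ[i] equals |γ|², where Q = [0,1) + i[0,1) is the half-open unit square and γQ = {γq : q ∈ Q}. -/
/-!
The half-open unit square is a fundamental domain for the lattice `ℤ[i]` in `ℂ`, so `γQ` is one
for the sublattice `γℤ[i]`: the Gaussian integers in `γQ` form a complete residue system
modulo `γ`. Their number is therefore `|ℤ[i] ⧸ (γ)|`, the absolute norm of the ideal `(γ)`,
which is the determinant of multiplication by `γ` on `ℤ[i] ≅ ℤ²`, namely `|γ|²`.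
-/

local notation "ℤ[i]" => GaussianInt
open Complex

open scoped Pointwise

namespace Zsqrtd

variable {d : ℤ}

def equivFun : ℤ√d ≃ₗ[ℤ] (Fin 2 → ℤ) where
  toFun z := ![z.re, z.im]
  invFun v := ⟨v 0, v 1⟩
  map_add' z w := by ext i; fin_cases i <;> simp
  map_smul' n z := by ext i; fin_cases i <;> simp
  left_inv z := by simp
  right_inv v := by ext i; fin_cases i <;> simp

noncomputable def basis : Module.Basis (Fin 2) ℤ (ℤ√d) := .ofEquivFun equivFun

instance : Module.Free ℤ (ℤ√d) := .of_basis basis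

instance : Module.Finite ℤ (ℤ√d) := .of_basis basis

theorem leftMulMatrix_basis (z : ℤ√d) :
    Algebra.leftMulMatrix basis z = !![z.re, d * z.im; z.im, z.re] := by
  ext i j
  fin_cases i <;> fin_cases j <;> simp [Algebra.leftMulMatrix_eq_repr_mul, basis, equivFun]

theorem algebraNorm_eq_norm (z : ℤ√d) : Algebra.norm ℤ z = z.norm := by
  rw [Algebra.norm_eq_matrix_det basis, leftMulMatrix_basis, Matrix.det_fin_two_of, norm]

end Zsqrtd

theorem Int.eq_zero_of_cast_eq_sub_of_mem_Ico {R : Type*} [Ring R] [LinearOrder R]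
    [IsOrderedRing R] [FloorRing R] {c : ℤ} {x y : R}
    (hx : x ∈ Set.Ico 0 1) (hy : y ∈ Set.Ico 0 1) (h : (c : R) = x - y) : c = 0 := by
  rw [← Int.floor_eq_zero_iff] at hx hy
  rw [eq_sub_iff_add_eq] at h
  simpa [hx, hy] using congrArg Int.floor h

namespace GaussianInt

-- `Ideal.absNorm` needs a Dedekind domain, which `ℤ√d` need not be; `ℤ[i]` is a PID.
theorem natCard_quotient_span_singleton (γ : ℤ[i]) :
    Nat.card (ℤ[i] ⧸ Ideal.span {γ}) = γ.norm.natAbs := by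
  rw [← Submodule.cardQuot_apply, ← Ideal.absNorm_apply, Ideal.absNorm_span_singleton,
    Zsqrtd.algebraNorm_eq_norm]

def unitSquare : Set ℂ := Set.Ico 0 1 ×ℂ Set.Ico 0 1

theorem exists_sub_mem_unitSquare (z : ℂ) : ∃ k : ℤ[i], z - k ∈ unitSquare := by
  refine ⟨⟨⌊z.re⌋, ⌊z.im⌋⟩, ?_⟩
  simp only [unitSquare, mem_reProdIm, sub_re, sub_im, re_toComplex, im_toComplex,
    Int.self_sub_floor]
  exact ⟨⟨Int.fract_nonneg _, Int.fract_lt_one _⟩, ⟨Int.fract_nonneg _, Int.fract_lt_one _⟩⟩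

theorem eq_zero_of_eq_sub_of_mem_unitSquare {c : ℤ[i]} {q q' : ℂ} (hq : q ∈ unitSquare)
    (hq' : q' ∈ unitSquare) (h : (c : ℂ) = q - q') : c = 0 := by
  rw [unitSquare, mem_reProdIm] at hq hq'
  ext
  · exact Int.eq_zero_of_cast_eq_sub_of_mem_Ico hq.1 hq'.1 (by rw [intCast_re, h, sub_re])
  · exact Int.eq_zero_of_cast_eq_sub_of_mem_Ico hq.2 hq'.2 (by rw [intCast_im, h, sub_im])

theorem bijective_quotientMk_preimage_smul_unitSquare {γ : ℤ[i]} (hγ : γ ≠ 0) :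
    Function.Bijective fun m : toComplex ⁻¹' ((γ : ℂ) • unitSquare) =>
      Ideal.Quotient.mk (Ideal.span {γ}) (m : ℤ[i]) := by
  have hγ' : (γ : ℂ) ≠ 0 := toComplex_eq_zero.not.mpr hγ
  have mem_iff (m : ℤ[i]) : m ∈ toComplex ⁻¹' ((γ : ℂ) • unitSquare) ↔
      (γ : ℂ)⁻¹ * m ∈ unitSquare :=
    Set.mem_smul_set_iff_inv_smul_mem₀ hγ' _ _
  constructor
  · rintro ⟨m, hm⟩ ⟨m', hm'⟩ h
    obtain ⟨c, hc⟩ := Ideal.mem_span_singleton.mp ((Ideal.Quotient.mk_eq_mk_iff_sub_mem _ _).mp h)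
    have hc' : (c : ℂ) = (γ : ℂ)⁻¹ * m - (γ : ℂ)⁻¹ * m' := by
      rw [← mul_sub, ← toComplex_sub, hc, toComplex_mul, inv_mul_cancel_left₀ hγ']
    have hc0 := eq_zero_of_eq_sub_of_mem_unitSquare ((mem_iff m).mp hm) ((mem_iff m').mp hm') hc'
    rw [hc0, mul_zero, sub_eq_zero] at hc
    exact Subtype.ext hc
  · intro x
    obtain ⟨m, rfl⟩ := Ideal.Quotient.mk_surjective x
    obtain ⟨k, hk⟩ := exists_sub_mem_unitSquare ((γ : ℂ)⁻¹ * m)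
    refine ⟨⟨m - γ * k, (mem_iff _).mpr ?_⟩, ?_⟩
    · rwa [toComplex_sub, toComplex_mul, mul_sub, inv_mul_cancel_left₀ hγ']
    · refine (Ideal.Quotient.mk_eq_mk_iff_sub_mem _ _).mpr (Ideal.mem_span_singleton.mpr ⟨-k, ?_⟩)
      ring

end GaussianInt

/-- For a nonzero Gaussian integer `γ`, the number of Gaussian integers
lying in the scaled half-open unit square `γQ`, `Q = [0,1) + i[0,1)`, equals `|γ|²`. -/
theorem card_scaled_square_inter_gaussian (γ : ℤ[i]) (hγ : γ ≠ 0) :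
    let Q : Set ℂ := {z | 0 ≤ z.re ∧ z.re < 1 ∧ 0 ≤ z.im ∧ z.im < 1}
    let Zi : Set ℂ := {z | ∃ m : ℤ[i], z = (m : ℂ)}
    (Set.ncard (((fun q => (γ : ℂ) * q) '' Q) ∩ Zi) : ℝ) = ‖(γ : ℂ)‖ ^ 2 := by
  intro Q Zi
  have hQ : Q = GaussianInt.unitSquare := by
    ext z
    simp [Q, GaussianInt.unitSquare, mem_reProdIm, and_assoc]
  have hZi : Zi = Set.range GaussianInt.toComplex := by
    ext z
    simp [Zi, eq_comm]
  have hset : ((fun q => (γ : ℂ) * q) '' Q) ∩ Zi =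
      GaussianInt.toComplex '' (GaussianInt.toComplex ⁻¹' ((γ : ℂ) • GaussianInt.unitSquare)) := by
    rw [Set.image_preimage_eq_inter_range, hQ, hZi, ← Set.image_smul]
    rfl
  have hbij := GaussianInt.bijective_quotientMk_preimage_smul_unitSquare hγ
  rw [hset, Set.ncard_image_of_injective _ GaussianInt.toComplex_injective, ← Nat.card_coe_set_eq,
    Nat.card_congr (Equiv.ofBijective _ hbij),
    GaussianInt.natCard_quotient_span_singleton, GaussianInt.natCast_natAbs_norm,
    GaussianInt.intCast_real_norm, Complex.sq_norm]
end

section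
/- Let B = [[a, c],[b, d]] over ℤ[i] with Δ = det B ≠ 0 and γ = gcd(a,c). Suppose (δ₁, δ₂) and (δ₁', δ₂') both lie in the set D = (γQ ∩ ℤ[i]) × ((Δ/γ)Q ∩ ℤ[i]) with Q = [0,1)+i[0,1), and (δ₁ − δ₁', δ₂ − δ₂')ᵀ = B (k,l)ᵀ for some k, l ∈ ℤ[i]. Then k = l = 0 and (δ₁, δ₂) = (δ₁', δ₂'). -/
local notation "ℤ[i]" => GaussianInt
open Complex

lemma box_int_zero (m : ℤ[i]) (q q' : ℂ)
    (hq : 0 ≤ q.re ∧ q.re < 1 ∧ 0 ≤ q.im ∧ q.im < 1)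
    (hq' : 0 ≤ q'.re ∧ q'.re < 1 ∧ 0 ≤ q'.im ∧ q'.im < 1)
    (h : (m : ℂ) = q - q') : m = 0 := by
  obtain ⟨x, y⟩ := m
  have hre : ((x : ℤ) : ℝ) = q.re - q'.re := by
    rw [← (by simp [GaussianInt.toComplex_def'] : ((⟨x, y⟩ : ℤ[i]) : ℂ).re = x)]
    show (GaussianInt.toComplex _).re = _
    rw [h]; simp
  have him : ((y : ℤ) : ℝ) = q.im - q'.im := by
    rw [← (by simp [GaussianInt.toComplex_def'] : ((⟨x, y⟩ : ℤ[i]) : ℂ).im = y)]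
    show (GaussianInt.toComplex _).im = _
    rw [h]; simp
  have hx : x = 0 := by
    have h1 : ((-1 : ℤ) : ℝ) < ((x : ℤ) : ℝ) := by
      rw [hre]; push_cast; linarith [hq.1, hq'.2.1]
    have h2 : ((x : ℤ) : ℝ) < ((1 : ℤ) : ℝ) := by
      rw [hre]; push_cast; linarith [hq.2.1, hq'.1]
    have h1' : (-1 : ℤ) < x := by exact_mod_cast h1
    have h2' : x < 1 := by exact_mod_cast h2
    omega
  have hy : y = 0 := by
    have h1 : ((-1 : ℤ) : ℝ) < ((y : ℤ) : ℝ) := by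
      rw [him]; push_cast; linarith [hq.2.2.1, hq'.2.2.2]
    have h2 : ((y : ℤ) : ℝ) < ((1 : ℤ) : ℝ) := by
      rw [him]; push_cast; linarith [hq.2.2.2, hq'.2.2.1]
    have h1' : (-1 : ℤ) < y := by exact_mod_cast h1
    have h2' : y < 1 := by exact_mod_cast h2
    omega
  simp [Zsqrtd.ext_iff, hx, hy]

/-- With `B = [[a,c],[b,d]]` over `ℤ[i]`, `Δ = det B ≠ 0`, `γ = gcd a c`,
if `(δ₁,δ₂)` and `(δ₁',δ₂')` both lie in `D = (γQ ∩ ℤ[i]) × ((Δ/γ)Q ∩ ℤ[i])` and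
`(δ₁ - δ₁', δ₂ - δ₂')ᵀ = B (k,l)ᵀ` for some `k,l ∈ ℤ[i]`, then `k = l = 0` and the
two representatives coincide. -/
theorem coset_representatives_unique (a b c d : ℤ[i]) (hΔ : a * d - b * c ≠ 0)
    (δ₁ δ₂ δ₁' δ₂' k l : ℤ[i])
    (h₁ : ∃ q : ℂ, (0 ≤ q.re ∧ q.re < 1 ∧ 0 ≤ q.im ∧ q.im < 1) ∧
      (δ₁ : ℂ) = ((EuclideanDomain.gcd a c : ℤ[i]) : ℂ) * q)
    (h₁' : ∃ q : ℂ, (0 ≤ q.re ∧ q.re < 1 ∧ 0 ≤ q.im ∧ q.im < 1) ∧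
      (δ₁' : ℂ) = ((EuclideanDomain.gcd a c : ℤ[i]) : ℂ) * q)
    (h₂ : ∃ q : ℂ, (0 ≤ q.re ∧ q.re < 1 ∧ 0 ≤ q.im ∧ q.im < 1) ∧
      (δ₂ : ℂ) = (((a * d - b * c) / EuclideanDomain.gcd a c : ℤ[i]) : ℂ) * q)
    (h₂' : ∃ q : ℂ, (0 ≤ q.re ∧ q.re < 1 ∧ 0 ≤ q.im ∧ q.im < 1) ∧
      (δ₂' : ℂ) = (((a * d - b * c) / EuclideanDomain.gcd a c : ℤ[i]) : ℂ) * q)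
    (hB : δ₁ - δ₁' = a * k + c * l ∧ δ₂ - δ₂' = b * k + d * l) :
    k = 0 ∧ l = 0 ∧ δ₁ = δ₁' ∧ δ₂ = δ₂' := by
  obtain ⟨q1, hq1, e1⟩ := h₁
  obtain ⟨q1', hq1', e1'⟩ := h₁'
  obtain ⟨q2, hq2, e2⟩ := h₂
  obtain ⟨q2', hq2', e2'⟩ := h₂'
  set γ : ℤ[i] := EuclideanDomain.gcd a c with hγdef
  have hγ0 : γ ≠ 0 := by
    intro h
    rw [hγdef, EuclideanDomain.gcd_eq_zero_iff] at h
    apply hΔ; rw [h.1, h.2]; ring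
  have hγc : (γ : ℂ) ≠ 0 := fun h => hγ0 (GaussianInt.toComplex_eq_zero.mp h)
  -- first coordinate
  have hdvd1 : γ ∣ a * k + c * l :=
    dvd_add ((EuclideanDomain.gcd_dvd_left a c).mul_right k)
      ((EuclideanDomain.gcd_dvd_right a c).mul_right l)
  obtain ⟨m, hm⟩ := hdvd1
  have hδ1 : δ₁ - δ₁' = γ * m := by rw [hB.1, hm]
  have hmC : (m : ℂ) = q1 - q1' := by
    apply mul_left_cancel₀ hγc
    have h' := congrArg GaussianInt.toComplex hδ1
    rw [map_sub, map_mul] at h'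
    show GaussianInt.toComplex γ * GaussianInt.toComplex m = _
    rw [← h', e1, e1']
    ring
  have hm0 : m = 0 := box_int_zero m q1 q1' hq1 hq1' hmC
  have hδ1eq : δ₁ = δ₁' := by
    have h0 : δ₁ - δ₁' = 0 := by rw [hδ1, hm0, mul_zero]
    exact sub_eq_zero.mp h0
  have h0 : a * k + c * l = 0 := by
    rw [← hB.1, hδ1eq, sub_self]
  -- second coordinate
  set ε : ℤ[i] := (a * d - b * c) / γ with hεdef
  have hdvdΔ : γ ∣ a * d - b * c :=
    dvd_sub ((EuclideanDomain.gcd_dvd_left a c).mul_right d)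
      ((EuclideanDomain.gcd_dvd_right a c).mul_left b)
  have hγε : γ * ε = a * d - b * c := EuclideanDomain.mul_div_cancel' hγ0 hdvdΔ
  have hε0 : ε ≠ 0 := by
    intro h
    apply hΔ; rw [← hγε, h, mul_zero]
  have hεc : (ε : ℂ) ≠ 0 := fun h => hε0 (GaussianInt.toComplex_eq_zero.mp h)
  have hbez : γ = a * EuclideanDomain.gcdA a c + c * EuclideanDomain.gcdB a c :=
    EuclideanDomain.gcd_eq_gcd_ab a c
  set x : ℤ[i] := EuclideanDomain.gcdA a c
  set y : ℤ[i] := EuclideanDomain.gcdB a c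
  have key : b * k + d * l = ε * (x * l - y * k) := by
    apply mul_left_cancel₀ hγ0
    linear_combination (b * k + d * l) * hbez + (y * k - x * l) * hγε + (x * b + y * d) * h0
  have hδ2 : δ₂ - δ₂' = ε * (x * l - y * k) := by rw [hB.2, key]
  have hsC : ((x * l - y * k : ℤ[i]) : ℂ) = q2 - q2' := by
    apply mul_left_cancel₀ hεc
    have h' := congrArg GaussianInt.toComplex hδ2
    rw [map_sub, map_mul] at h'
    show GaussianInt.toComplex ε * GaussianInt.toComplex _ = _
    rw [← h', e2, e2']
    ring
  have hs0 : x * l - y * k = 0 := box_int_zero _ q2 q2' hq2 hq2' hsC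
  have hδ2eq : δ₂ = δ₂' := by
    have h2 : δ₂ - δ₂' = 0 := by rw [hδ2, hs0, mul_zero]
    exact sub_eq_zero.mp h2
  have h0' : b * k + d * l = 0 := by rw [← hB.2, hδ2eq, sub_self]
  have hk : k = 0 := by
    have hΔk : (a * d - b * c) * k = 0 := by linear_combination d * h0 - c * h0'
    rcases mul_eq_zero.mp hΔk with h | h
    · exact absurd h hΔ
    · exact h
  have hl : l = 0 := by
    have hΔl : (a * d - b * c) * l = 0 := by linear_combination a * h0' - b * h0
    rcases mul_eq_zero.mp hΔl with h | h
    · exact absurd h hΔ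
    · exact h
  exact ⟨hk, hl, hδ1eq, hδ2eq⟩
end

section
/- Let B = [[a, c],[b, d]] be a 2×2 matrix with entries in ℤ ⊆ ℤ[i], det B ≠ 0, and gcd(a,c) = 1 over ℤ. Then the set D = {(0, α + iα') : α, α' ∈ ℤ, 0 ≤ α, α' < |det B|} is a complete set of coset representatives of ℤ[i]² / B ℤ[i]². -/
local notation "ℤ[i]" => GaussianInt

/-!
Bezout coefficients `x a + y c = 1` turn the row `(a c)` of `B` into part of a unimodular matrix, so
`B` is equivalent to `diag(1, det B)` and its image is cut out by a single congruence
`t₂ ≡ (b x + d y) t₁ (mod det B)`. Modulo the integer `det B`, real and imaginary parts can be reduced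
independently into `[0, |det B|)`.
-/

theorem Int.existsUnique_mem_Ico_dvd_sub {n : ℤ} (hn : n ≠ 0) (k : ℤ) :
    ∃! α : ℤ, (0 ≤ α ∧ α < |n|) ∧ n ∣ k - α := by
  have hpos : 0 < |n| := abs_pos.mpr hn
  refine ⟨k % |n|, ⟨⟨Int.emod_nonneg _ hpos.ne', Int.emod_lt_of_pos _ hpos⟩, ?_⟩, ?_⟩
  · exact (abs_dvd _ _).mp (Int.modEq_iff_dvd.mp (Int.mod_modEq k |n|))
  · rintro β ⟨⟨hβ0, hβn⟩, hdvd⟩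
    rw [← Int.emod_eq_of_lt hβ0 hβn]
    exact Int.modEq_iff_dvd.mpr ((abs_dvd _ _).mpr hdvd)

theorem GaussianInt.existsUnique_mem_box_dvd_sub {n : ℤ} (hn : n ≠ 0) (z : ℤ[i]) :
    ∃! r : ℤ[i], (∃ α α' : ℤ, 0 ≤ α ∧ α < |n| ∧ 0 ≤ α' ∧ α' < |n| ∧ r = ⟨α, α'⟩) ∧
      (n : ℤ[i]) ∣ z - r := by
  obtain ⟨α, ⟨⟨hα, hαn⟩, hre⟩, hα_uniq⟩ := Int.existsUnique_mem_Ico_dvd_sub hn z.re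
  obtain ⟨α', ⟨⟨hα', hα'n⟩, him⟩, hα'_uniq⟩ := Int.existsUnique_mem_Ico_dvd_sub hn z.im
  refine ⟨⟨α, α'⟩, ⟨⟨α, α', hα, hαn, hα', hα'n, rfl⟩, (Zsqrtd.intCast_dvd _ _).mpr ⟨hre, him⟩⟩, ?_⟩
  rintro r ⟨⟨β, β', hβ, hβn, hβ', hβ'n, rfl⟩, hdvd⟩
  obtain ⟨hre', him'⟩ := (Zsqrtd.intCast_dvd _ _).mp hdvd
  rw [hα_uniq β ⟨⟨hβ, hβn⟩, hre'⟩, hα'_uniq β' ⟨⟨hβ', hβ'n⟩, him'⟩]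

theorem exists_eq_matrix_apply_iff_dvd {R : Type*} [CommRing R] {a b c d x y : R}
    (hxy : x * a + y * c = 1) (t : R × R) :
    (∃ v : R × R, t = (a * v.1 + c * v.2, b * v.1 + d * v.2)) ↔
      a * d - b * c ∣ t.2 - (b * x + d * y) * t.1 := by
  constructor
  · rintro ⟨v, rfl⟩
    exact ⟨x * v.2 - y * v.1, by linear_combination (-b * v.1 - d * v.2) * hxy⟩
  · rintro ⟨u, hu⟩
    refine ⟨(x * t.1 - c * u, y * t.1 + a * u), Prod.ext ?_ ?_⟩
    · linear_combination (-t.1) * hxy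
    · linear_combination hu

/-- For `B = [[a,c],[b,d]]` with integer entries, `det B ≠ 0` and
`gcd a c = 1` over `ℤ`, the set `D = {(0, α + iα') : 0 ≤ α, α' < |det B|}` is a
complete set of coset representatives of `ℤ[i]² / B ℤ[i]²`. -/
theorem coset_representatives_int (a b c d : ℤ) (hΔ : a * d - b * c ≠ 0)
    (hgcd : Int.gcd a c = 1) :
    let D : Set (ℤ[i] × ℤ[i]) :=
      {δ | δ.1 = 0 ∧ ∃ α α' : ℤ, 0 ≤ α ∧ α < |a * d - b * c| ∧ 0 ≤ α' ∧ α' < |a * d - b * c| ∧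
        δ.2 = ⟨α, α'⟩}
    let S : Set (ℤ[i] × ℤ[i]) :=
      {w | ∃ v : ℤ[i] × ℤ[i], w = ((a : ℤ[i]) * v.1 + (c : ℤ[i]) * v.2,
        (b : ℤ[i]) * v.1 + (d : ℤ[i]) * v.2)}
    ∀ w : ℤ[i] × ℤ[i], ∃! δ : ℤ[i] × ℤ[i], δ ∈ D ∧ (w.1 - δ.1, w.2 - δ.2) ∈ S := by
  intro D S w
  obtain ⟨x, y, hxy⟩ := (Int.isCoprime_iff_gcd_eq_one.mpr hgcd).map (Int.castRingHom ℤ[i])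
  set e : ℤ[i] := b * x + d * y
  have hS (t : ℤ[i] × ℤ[i]) : t ∈ S ↔ ((a * d - b * c : ℤ) : ℤ[i]) ∣ t.2 - e * t.1 := by
    push_cast
    exact exists_eq_matrix_apply_iff_dvd hxy t
  obtain ⟨r, ⟨hr, hdvd⟩, huniq⟩ := GaussianInt.existsUnique_mem_box_dvd_sub hΔ (w.2 - e * w.1)
  refine ⟨(0, r), ⟨⟨rfl, hr⟩, ?_⟩, ?_⟩
  · rw [hS]
    convert hdvd using 1
    ring
  · rintro δ ⟨⟨hδ₁, hδ₂⟩, hδS⟩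
    rw [hS, hδ₁] at hδS
    refine Prod.ext hδ₁ (huniq _ ⟨hδ₂, ?_⟩)
    convert hδS using 1
    ring
end

section
/- Let q ∈ ℤ[i] with |q| ≥ 2 and let D = {δ ∈ ℤ[i] : δ = δ₁ + iδ₂, 0 ≤ δ₁, δ₂ < |q|²} (assuming |q|² ∈ ℤ). Then the subset E₀ = {δ ∈ D : q divides δ in ℤ[i]} has cardinality |q|², and D \ E₀ has cardinality |q|⁴ − |q|². -/
local notation "ℤ[i]" => GaussianInt

/-!
Reduction modulo `n = q q̄ = |q|²` identifies the box `D` with `ℤ[i] ⧸ (n)`, a ring with `n²`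
elements, and identifies `E₀` with the multiples of `q` in it. Since `q x ≡ 0 (mod q q̄)` iff
`q̄ ∣ x`, the kernel of multiplication by `q` on `ℤ[i] ⧸ (n)` consists of the multiples of `q̄`,
so `n² = #(q-multiples) · #(q̄-multiples)`; complex conjugation preserves `(n)` and swaps the two
factors, whence `#E₀ = n`.
-/

section MulLeftQuotient

variable {A : Type*} [CommRing A]

theorem ker_mulLeft_mk_span_mul [IsDomain A] {a b : A} (ha : a ≠ 0) :
    (AddMonoidHom.mulLeft (Ideal.Quotient.mk (Ideal.span {a * b}) a)).ker =
      (AddMonoidHom.mulLeft (Ideal.Quotient.mk (Ideal.span {a * b}) b)).range := by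
  ext x
  obtain ⟨y, rfl⟩ := Ideal.Quotient.mk_surjective x
  simp only [AddMonoidHom.mem_ker, AddMonoidHom.mem_range, AddMonoidHom.coe_mulLeft,
    ← map_mul, Ideal.Quotient.eq_zero_iff_dvd, mul_dvd_mul_iff_left ha]
  constructor
  · rintro ⟨z, rfl⟩
    exact ⟨Ideal.Quotient.mk _ z, (map_mul _ _ _).symm⟩
  · rintro ⟨z, hz⟩
    obtain ⟨z, rfl⟩ := Ideal.Quotient.mk_surjective z
    rw [← map_mul, Ideal.Quotient.eq, Ideal.mem_span_singleton] at hz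
    exact (dvd_sub_right (dvd_mul_right b z)).mp ((dvd_mul_left b a).trans hz)

theorem card_quotient_span_mul [IsDomain A] {a b : A} (ha : a ≠ 0) :
    Nat.card (A ⧸ Ideal.span {a * b}) =
      Nat.card (AddMonoidHom.mulLeft (Ideal.Quotient.mk (Ideal.span {a * b}) a)).range *
        Nat.card (AddMonoidHom.mulLeft (Ideal.Quotient.mk (Ideal.span {a * b}) b)).range := by
  rw [← AddSubgroup.card_mul_index (AddMonoidHom.mulLeft _).ker, AddSubgroup.index_ker,
    ker_mulLeft_mk_span_mul ha, mul_comm]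

theorem card_range_mulLeft_mk_ringEquiv (σ : A ≃+* A) {I : Ideal A}
    (hI : I.map (σ : A →+* A) = I) (a : A) :
    Nat.card (AddMonoidHom.mulLeft (Ideal.Quotient.mk I (σ a))).range =
      Nat.card (AddMonoidHom.mulLeft (Ideal.Quotient.mk I a)).range := by
  set τ := Ideal.quotientEquiv I I σ hI.symm
  have hτ (x : A ⧸ I) : τ (Ideal.Quotient.mk I a * x) = Ideal.Quotient.mk I (σ a) * τ x := by
    rw [map_mul, Ideal.quotientEquiv_mk]
  have hrange : (AddMonoidHom.mulLeft (Ideal.Quotient.mk I (σ a))).range =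
      (AddMonoidHom.mulLeft (Ideal.Quotient.mk I a)).range.map (τ : A ⧸ I →+ A ⧸ I) := by
    ext x
    simp only [AddMonoidHom.mem_range, AddSubgroup.mem_map, AddMonoidHom.coe_mulLeft,
      exists_exists_eq_and, AddMonoidHom.coe_coe, hτ]
    exact ⟨fun ⟨y, hy⟩ => ⟨τ.symm y, by rw [τ.apply_symm_apply, hy]⟩,
      fun ⟨y, hy⟩ => ⟨τ y, hy⟩⟩
  rw [hrange, AddSubgroup.card_map_of_injective (f := (τ : A ⧸ I →+ A ⧸ I)) τ.injective]

theorem bijOn_mk_sep_dvd {I : Ideal A} {S : Set A}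
    (hS : Set.BijOn (Ideal.Quotient.mk I) S Set.univ) {q : A} (hq : I ≤ Ideal.span {q}) :
    Set.BijOn (Ideal.Quotient.mk I) {s ∈ S | q ∣ s}
      (AddMonoidHom.mulLeft (Ideal.Quotient.mk I q)).range := by
  refine ⟨?_, hS.injOn.mono (Set.sep_subset _ _), ?_⟩
  · rintro s ⟨-, m, rfl⟩
    exact ⟨Ideal.Quotient.mk I m, (map_mul _ _ _).symm⟩
  · rintro _ ⟨x, rfl⟩
    obtain ⟨m, rfl⟩ := Ideal.Quotient.mk_surjective x
    obtain ⟨s, hs, hsm⟩ := hS.surjOn (Set.mem_univ (Ideal.Quotient.mk I (q * m)))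
    have hdvd : q ∣ s - q * m := Ideal.mem_span_singleton.mp (hq (Ideal.Quotient.eq.mp hsm))
    exact ⟨s, ⟨hs, (dvd_sub_left (dvd_mul_right q m)).mp hdvd⟩, hsm.trans (map_mul _ _ _)⟩

end MulLeftQuotient

namespace Zsqrtd

variable {d : ℤ}

def box (n : ℤ) : Set (ℤ√d) := {δ | 0 ≤ δ.re ∧ δ.re < n ∧ 0 ≤ δ.im ∧ δ.im < n}

theorem ncard_box (n : ℤ) : (box n : Set (ℤ√d)).ncard = n.toNat ^ 2 := by
  have hbij : Set.BijOn (fun δ : ℤ√d => (δ.re, δ.im)) (box n) (Set.Ico 0 n ×ˢ Set.Ico 0 n) :=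
    ⟨fun δ hδ => ⟨⟨hδ.1, hδ.2.1⟩, hδ.2.2⟩, fun x _ y _ h => by simpa [Zsqrtd.ext_iff] using h,
      fun p hp => ⟨⟨p.1, p.2⟩, ⟨hp.1.1, hp.1.2, hp.2⟩, rfl⟩⟩
  rw [hbij.ncard_eq, Set.ncard_prod, ← Finset.coe_Ico, Set.ncard_coe_finset, Int.card_Ico,
    sub_zero, sq]

theorem bijOn_mk_box {n : ℤ} (hn : 0 < n) :
    Set.BijOn (Ideal.Quotient.mk (Ideal.span {(n : ℤ√d)})) (box n) Set.univ := by
  have eq_of_dvd_sub {u v : ℤ} (hu : 0 ≤ u ∧ u < n) (hv : 0 ≤ v ∧ v < n) (h : n ∣ u - v) :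
      u = v :=
    sub_eq_zero.mp <| Int.eq_zero_of_abs_lt_dvd h <| abs_sub_lt_iff.mpr ⟨by linarith, by linarith⟩
  refine ⟨Set.mapsTo_univ _ _, fun x hx y hy h => ?_, fun x _ => ?_⟩
  · rw [Ideal.Quotient.eq, Ideal.mem_span_singleton, intCast_dvd, re_sub, im_sub] at h
    exact Zsqrtd.ext (eq_of_dvd_sub ⟨hx.1, hx.2.1⟩ ⟨hy.1, hy.2.1⟩ h.1)
      (eq_of_dvd_sub hx.2.2 hy.2.2 h.2)
  · obtain ⟨x, rfl⟩ := Ideal.Quotient.mk_surjective x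
    refine ⟨⟨x.re % n, x.im % n⟩, ⟨Int.emod_nonneg _ hn.ne', Int.emod_lt_of_pos _ hn,
      Int.emod_nonneg _ hn.ne', Int.emod_lt_of_pos _ hn⟩, ?_⟩
    rw [Ideal.Quotient.eq, Ideal.mem_span_singleton, intCast_dvd]
    exact ⟨by simp [Int.emod_def], by simp [Int.emod_def]⟩

end Zsqrtd

theorem GaussianInt.card_quotient_span_norm {q : ℤ[i]} (hq : q ≠ 0) :
    Nat.card (ℤ[i] ⧸ Ideal.span {(q.norm : ℤ[i])}) =
      Nat.card (AddMonoidHom.mulLeft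
        (Ideal.Quotient.mk (Ideal.span {(q.norm : ℤ[i])}) q)).range ^ 2 := by
  have hconj : (Ideal.span {q * star q}).map (starRingAut : ℤ[i] ≃+* ℤ[i]) =
      Ideal.span {q * star q} := by
    rw [Ideal.map_span, Set.image_singleton, map_mul, starRingAut_apply, starRingAut_apply,
      star_star, mul_comm]
  rw [Zsqrtd.norm_eq_mul_conj, card_quotient_span_mul hq, sq]
  exact congrArg _ (card_range_mulLeft_mk_ringEquiv starRingAut hconj q)

/-- For `q ∈ ℤ[i]` with `|q| ≥ 2` and
`D = {δ = δ₁ + iδ₂ ∈ ℤ[i] : 0 ≤ δ₁, δ₂ < |q|²}`, the set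
`E₀ = {δ ∈ D : q ∣ δ}` has cardinality `|q|²` and `D \ E₀` has cardinality
`|q|⁴ - |q|²`. -/
theorem card_divisible_representatives (q : ℤ[i]) (hq : 2 ≤ ‖(q : ℂ)‖) :
    let n : ℤ := Zsqrtd.norm q
    let D : Set ℤ[i] := {δ | 0 ≤ δ.re ∧ δ.re < n ∧ 0 ≤ δ.im ∧ δ.im < n}
    let E₀ : Set ℤ[i] := {δ ∈ D | q ∣ δ}
    (E₀.ncard : ℤ) = n ∧ ((D \ E₀).ncard : ℤ) = n ^ 2 - n := by
  intro n D E₀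
  have hq0 : q ≠ 0 := by
    rintro rfl
    norm_num at hq
  have hn : 0 < n := GaussianInt.norm_pos.mpr hq0
  have hD : D.ncard = n.toNat ^ 2 := Zsqrtd.ncard_box n
  have hbox : Set.BijOn (Ideal.Quotient.mk (Ideal.span {(n : ℤ[i])})) D Set.univ :=
    Zsqrtd.bijOn_mk_box hn
  have hE₀ : E₀.ncard = n.toNat := by
    have hqn : Ideal.span {(n : ℤ[i])} ≤ Ideal.span {q} :=
      Ideal.span_singleton_le_span_singleton.mpr ⟨star q, Zsqrtd.norm_eq_mul_conj q⟩
    have hsq : D.ncard = E₀.ncard ^ 2 := by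
      rw [hbox.ncard_eq, Set.ncard_univ, GaussianInt.card_quotient_span_norm hq0,
        (bijOn_mk_sep_dvd hbox hqn).ncard_eq]
      exact congrArg (· ^ 2) (Nat.card_coe_set_eq _)
    exact Nat.pow_left_injective two_ne_zero (hsq.symm.trans hD)
  have hE₀fin : E₀.Finite := Set.finite_of_ncard_pos (by omega)
  rw [Set.ncard_sdiff (Set.sep_subset D _) hE₀fin, hD, hE₀,
    Nat.cast_sub (Nat.le_self_pow two_ne_zero _), Nat.cast_pow, Int.toNat_of_nonneg hn.le]
  exact ⟨rfl, rfl⟩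
end
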